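/- Let n ≥ 1. The number of functions f : Fin n → Fin n having a unique periodic point (exactly one x : Fin n with f^[k] x = x for some k ≥ 1) equals n^(n-1). -/

import Mathlib

open SimpleGraph

/-- A transformation monoid is *synchronizing* if it contains an element of rank 1,
i.e. whose range has exactly one element. -/
def IsSynchronizing {n : ℕ} (M : Submonoid (Function.End (Fin n))) : Prop :=
  ∃ f ∈ M, ∃ c : Fin n, Set.range f = {c}

/-- The graph `Gr(M)` of a transformation monoid `M`: distinct vertices `v, w` are
adjacent iff no element of `M` identifies them. -/
def Gr {n : ℕ} (M : Submonoid (Function.End (Fin n))) : SimpleGraph (Fin n) where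
  Adj v w := v ≠ w ∧ ∀ f ∈ M, f v ≠ f w
  symm := ⟨fun v w ⟨h1, h2⟩ => ⟨h1.symm, fun f hf => (h2 f hf).symm⟩⟩
  loopless := ⟨fun v ⟨h1, _⟩ => h1 rfl⟩

/-- The monoid of endomorphisms of a graph `X`, as a submonoid of `Function.End`. -/
def GraphEnd {n : ℕ} (X : SimpleGraph (Fin n)) : Submonoid (Function.End (Fin n)) where
  carrier := {f | ∀ ⦃v w⦄, X.Adj v w → X.Adj (f v) (f w)}
  one_mem' := by intro v w h; exact h
  mul_mem' := by intro f g hf hg v w h; exact hf (hg h)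

/-- The hull of a graph: `Hull(X) = Gr(End(X))`. -/
def Hull {n : ℕ} (X : SimpleGraph (Fin n)) : SimpleGraph (Fin n) := Gr (GraphEnd X)

/-- The derived graph `X'` of `X`: keep only the edges lying in a clique of
maximum size `ω(X)`. -/
def derivedGraph {n : ℕ} (X : SimpleGraph (Fin n)) : SimpleGraph (Fin n) where
  Adj v w := X.Adj v w ∧ ∃ s : Finset (Fin n), X.IsNClique X.cliqueNum s ∧ v ∈ s ∧ w ∈ s
  symm := ⟨fun v w ⟨h, s, hs, hv, hw⟩ => ⟨h.symm, s, hs, hw, hv⟩⟩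
  loopless := ⟨fun v ⟨h, _⟩ => h.ne rfl⟩

/-! Joyal's argument. A map `f : α → α` amounts to a set `S` (its periodic points), a
permutation of `S` (the restriction of `f`) and a rooted forest with root set `S` (the rest
of `f`). A map `g` with a unique periodic point `r`, together with a point `x`, amounts to a
set `S` (the path `x, g x, …, r`), a linear arrangement of `S` (the order of that path) and
again a rooted forest with root set `S`. Every `S` carries as many permutations as linear
arrangements, so `n ^ n = U * n`, where `U` counts the maps with a unique periodic point. -/

open Function Set

namespace Function

variable {α : Type*}

theorem exists_iterate_mem_periodicPts [Finite α] (f : α → α) (x : α) :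
    ∃ m, f^[m] x ∈ periodicPts f := by
  obtain ⟨i, j, hij, h⟩ := Set.finite_univ.exists_lt_map_eq_of_forall_mem
    (f := fun m => f^[m] x) fun _ => mem_univ _
  refine ⟨i, mk_mem_periodicPts (Nat.sub_pos_of_lt hij) ?_⟩
  change f^[j - i] (f^[i] x) = f^[i] x
  rw [← iterate_add_apply, Nat.sub_add_cancel hij.le]
  exact h.symm

theorem forall_exists_iterate_mem_of_eqOn_compl {f g : α → α} {S : Set α} (hfg : EqOn f g Sᶜ)
    (hg : ∀ x, ∃ m, g^[m] x ∈ S) (x : α) : ∃ m, f^[m] x ∈ S := by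
  obtain ⟨m, hm⟩ := hg x
  induction m generalizing x with
  | zero => exact ⟨0, hm⟩
  | succ m ih =>
    by_cases hx : x ∈ S
    · exact ⟨0, hx⟩
    · obtain ⟨k, hk⟩ := ih (g x) hm
      exact ⟨k + 1, by rwa [iterate_succ_apply, hfg hx]⟩

theorem periodicPts_eq_of_mapsTo_of_injOn [Finite α] {f : α → α} {S : Set α}
    (hmaps : MapsTo f S S) (hinj : InjOn f S) (hreach : ∀ x, ∃ m, f^[m] x ∈ S) :
    periodicPts f = S := by
  refine Subset.antisymm (fun x hx => ?_) (fun x hx => ?_)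
  · obtain ⟨p, hp, hpx⟩ := mem_periodicPts.mp hx
    obtain ⟨m, hm⟩ := hreach x
    have hx_eq : f^[p * m - m] (f^[m] x) = x := by
      rw [← iterate_add_apply, Nat.sub_add_cancel (Nat.le_mul_of_pos_left m hp)]
      exact hpx.mul_const m
    exact hx_eq ▸ hmaps.iterate _ hm
  · have hsemi : Semiconj Subtype.val (hmaps.restrict f S S) f := fun _ => rfl
    exact hsemi.mapsTo_periodicPts ((hmaps.restrict_inj.mpr hinj).mem_periodicPts ⟨x, hx⟩)

theorem existsUnique_periodic_iff_periodicPts_eq_singleton {f : α → α} :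
    (∃! x, ∃ k ≥ 1, f^[k] x = x) ↔ ∃ r, periodicPts f = {r} := by
  simp only [ExistsUnique, eq_singleton_iff_unique_mem, mem_periodicPts]
  rfl

theorem apply_eq_of_periodicPts_eq_singleton {f : α → α} {r : α} (hr : periodicPts f = {r}) :
    f r = r := by
  simpa [hr] using (bijOn_periodicPts f).mapsTo (by rw [hr]; exact mem_singleton r)

section Preperiod

variable [Finite α] (f : α → α) (x : α)

open Classical in
noncomputable def preperiod : ℕ := Nat.find (exists_iterate_mem_periodicPts f x)

theorem iterate_preperiod_mem_periodicPts : f^[preperiod f x] x ∈ periodicPts f := by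
  classical exact Nat.find_spec (exists_iterate_mem_periodicPts f x)

theorem iterate_notMem_periodicPts_of_lt_preperiod {i : ℕ} (hi : i < preperiod f x) :
    f^[i] x ∉ periodicPts f := by
  classical exact Nat.find_min (exists_iterate_mem_periodicPts f x) hi

theorem injOn_iterate_Iic_preperiod : InjOn (f^[·] x) (Iic (preperiod f x)) := by
  have key : ∀ i j, i < j → j ≤ preperiod f x → f^[i] x ≠ f^[j] x := fun i j hij hj heq =>
    iterate_notMem_periodicPts_of_lt_preperiod f x (hij.trans_le hj) <|
      mk_mem_periodicPts (Nat.sub_pos_of_lt hij) <| by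
        change f^[j - i] (f^[i] x) = f^[i] x
        rw [← iterate_add_apply, Nat.sub_add_cancel hij.le, heq]
  intro i hi j hj heq
  rcases lt_trichotomy i j with hij | rfl | hij
  · exact absurd heq (key i j hij hj)
  · rfl
  · exact absurd heq.symm (key j i hij hi)

noncomputable def spine : Set α := (f^[·] x) '' Iic (preperiod f x)

theorem card_spine : Nat.card (spine f x) = preperiod f x + 1 := by
  rw [spine, Nat.card_image_of_injOn (injOn_iterate_Iic_preperiod f x)]
  simp

variable {f x} {S : Set α}

theorem iterate_mem_spine {i : ℕ} (hi : i ≤ preperiod f x) : f^[i] x ∈ spine f x :=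
  mem_image_of_mem _ hi

theorem iterate_min_preperiod (hfix : f (f^[preperiod f x] x) = f^[preperiod f x] x) (j : ℕ) :
    f^[min j (preperiod f x)] x = f^[j] x := by
  rcases le_total j (preperiod f x) with hj | hj
  · rw [min_eq_left hj]
  · rw [min_eq_right hj, ← Nat.sub_add_cancel hj, iterate_add_apply, iterate_fixed hfix]

theorem exists_iterate_mem_spine {r : α} (hr : periodicPts f = {r}) (y : α) :
    ∃ m, f^[m] y ∈ spine f x := by
  refine ⟨preperiod f y, ?_⟩
  have hy := iterate_preperiod_mem_periodicPts f y
  have hx := iterate_preperiod_mem_periodicPts f x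
  rw [hr, mem_singleton_iff] at hx hy
  rw [hy, ← hx]
  exact iterate_mem_spine le_rfl

noncomputable def spineEquiv (hS : spine f x = S) : Fin (Nat.card S) ≃ S :=
  have hcard : Nat.card S = preperiod f x + 1 := by rw [← hS, card_spine]
  Equiv.ofBijective (fun i => ⟨f^[i] x, hS.subset (iterate_mem_spine (by omega))⟩) <| by
    refine ⟨fun i j hij => Fin.ext ?_, fun ⟨y, hy⟩ => ?_⟩
    · exact injOn_iterate_Iic_preperiod f x (show (i : ℕ) ≤ _ by omega)
        (show (j : ℕ) ≤ _ by omega) (congrArg Subtype.val hij)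
    · rw [← hS] at hy
      obtain ⟨j, hj, rfl⟩ := hy
      exact ⟨⟨j, by rw [mem_Iic] at hj; omega⟩, rfl⟩

theorem spineEquiv_apply (hS : spine f x = S) (i : Fin (Nat.card S)) :
    (spineEquiv hS i : α) = f^[i] x :=
  rfl

end Preperiod

end Function

section RootedForest

variable {α : Type*} {S : Set α}

open Classical in
noncomputable def piecewiseOn (S : Set α) (φ : S → α) (h : α → α) : α → α :=
  fun x => if hx : x ∈ S then φ ⟨x, hx⟩ else h x

theorem piecewiseOn_of_mem {φ : S → α} {h : α → α} {x : α} (hx : x ∈ S) :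
    piecewiseOn S φ h x = φ ⟨x, hx⟩ :=
  dif_pos hx

theorem piecewiseOn_of_notMem {φ : S → α} {h : α → α} {x : α} (hx : x ∉ S) :
    piecewiseOn S φ h x = h x :=
  dif_neg hx

theorem eqOn_compl_piecewiseOn (φ : S → α) (h : α → α) : EqOn (piecewiseOn S φ h) h Sᶜ :=
  fun _ hx => piecewiseOn_of_notMem hx

variable (S) in
/-- Parent maps of the rooted forests on `α` whose set of roots is `S`. -/
abbrev RootedForest : Type _ := {h : α → α // EqOn h id S ∧ ∀ x, ∃ m, h^[m] x ∈ S}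

theorem piecewiseOn_val_piecewiseOn (φ : S → α) (h : RootedForest S) :
    piecewiseOn S Subtype.val (piecewiseOn S φ h.1) = h.1 := by
  funext x
  by_cases hx : x ∈ S
  · rw [piecewiseOn_of_mem hx, h.2.1 hx, id]
  · rw [piecewiseOn_of_notMem hx, piecewiseOn_of_notMem hx]

noncomputable def RootedForest.cut {f : α → α} (hf : ∀ x, ∃ m, f^[m] x ∈ S) :
    RootedForest S :=
  ⟨piecewiseOn S Subtype.val f, fun _ hx => piecewiseOn_of_mem hx,
    forall_exists_iterate_mem_of_eqOn_compl (eqOn_compl_piecewiseOn _ _) hf⟩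

theorem RootedForest.card_pos [Finite α] [Nonempty α] (h : RootedForest S) : 0 < Nat.card S := by
  obtain ⟨m, hm⟩ := h.2.2 (Classical.arbitrary α)
  have : Nonempty S := ⟨⟨_, hm⟩⟩
  exact Nat.card_pos

theorem periodicPts_piecewiseOn_perm [Finite α] (σ : Equiv.Perm S) (h : RootedForest S) :
    periodicPts (piecewiseOn S (fun x => σ x) h.1) = S := by
  refine periodicPts_eq_of_mapsTo_of_injOn (fun x hx => ?_) (fun x hx y hy hxy => ?_)
    (forall_exists_iterate_mem_of_eqOn_compl (eqOn_compl_piecewiseOn _ _) h.2.2)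
  · rw [piecewiseOn_of_mem hx]
    exact (σ _).2
  · rw [piecewiseOn_of_mem hx, piecewiseOn_of_mem hy] at hxy
    exact congrArg Subtype.val (σ.injective (Subtype.ext hxy))

variable (S) in
noncomputable def periodicPtsFiberEquiv [Finite α] :
    {f : α → α // periodicPts f = S} ≃ Equiv.Perm S × RootedForest S where
  toFun f := (BijOn.equiv f.1 (by simpa only [f.2] using bijOn_periodicPts f.1),
    RootedForest.cut (by simpa only [f.2] using exists_iterate_mem_periodicPts f.1))
  invFun p := ⟨piecewiseOn S (fun x => p.1 x) p.2.1, periodicPts_piecewiseOn_perm p.1 p.2⟩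
  left_inv f := by
    ext x
    dsimp only [RootedForest.cut]
    by_cases hx : x ∈ S
    · exact piecewiseOn_of_mem hx
    · rw [piecewiseOn_of_notMem hx]
      exact piecewiseOn_of_notMem hx
  right_inv p := by
    refine Prod.ext (Equiv.ext fun x => Subtype.ext ?_) (Subtype.ext ?_)
    · simp only [BijOn.equiv, Equiv.ofBijective_apply, MapsTo.val_restrict_apply]
      exact piecewiseOn_of_mem x.2
    · dsimp only [RootedForest.cut]
      exact piecewiseOn_val_piecewiseOn _ p.2

end RootedForest

section Spine

variable {α : Type*} {S : Set α} {k : ℕ}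

noncomputable def pathStep (e : Fin k ≃ S) (y : S) : α :=
  e ⟨min (e.symm y + 1) (k - 1), by have := (e.symm y).isLt; omega⟩

theorem pathStep_apply (e : Fin k ≃ S) (i : Fin k) :
    pathStep e (e i) = e ⟨min (i + 1) (k - 1), by omega⟩ := by
  simp only [pathStep, Equiv.symm_apply_apply]

theorem iterate_piecewiseOn_pathStep (e : Fin k ≃ S) (h : α → α) (i : Fin k) (j : ℕ) :
    (piecewiseOn S (pathStep e) h)^[j] (e i) = e ⟨min (i + j) (k - 1), by omega⟩ := by
  induction j with
  | zero => simp [show min (i : ℕ) (k - 1) = i by omega]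
  | succ j ih =>
    rw [iterate_succ_apply', ih, piecewiseOn_of_mem (e _).2, Subtype.coe_eta, pathStep_apply]
    congr 3
    dsimp only
    omega

theorem periodicPts_piecewiseOn_pathStep [Finite α] (e : Fin k ≃ S) (hk : 0 < k)
    (h : RootedForest S) :
    periodicPts (piecewiseOn S (pathStep e) h.1) = {(e ⟨k - 1, by omega⟩ : α)} := by
  set g := piecewiseOn S (pathStep e) h.1
  have hlast : ∀ (i : Fin k) j, k - 1 ≤ i + j → g^[j] (e i) = e ⟨k - 1, by omega⟩ :=
    fun i j hij => by
      rw [iterate_piecewiseOn_pathStep]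
      congr 3
      omega
  refine periodicPts_eq_of_mapsTo_of_injOn (mapsTo_singleton.2 ?_) (injOn_singleton _ _)
    fun x => ?_
  · exact hlast _ 1 (by simp)
  · obtain ⟨m, hm⟩ := forall_exists_iterate_mem_of_eqOn_compl
      (eqOn_compl_piecewiseOn (pathStep e) _) h.2.2 x
    have hm' : g^[m] x = e (e.symm ⟨_, hm⟩) := by rw [e.apply_symm_apply]
    refine ⟨k - 1 + m, ?_⟩
    rw [iterate_add_apply, hm', hlast _ _ (by omega)]
    exact mem_singleton _

theorem spine_piecewiseOn_pathStep [Finite α] (e : Fin k ≃ S) (hk : 0 < k)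
    (h : RootedForest S) : spine (piecewiseOn S (pathStep e) h.1) (e ⟨0, hk⟩) = S := by
  set g := piecewiseOn S (pathStep e) h.1
  have hiter : ∀ j, g^[j] (e ⟨0, hk⟩) = e ⟨min j (k - 1), by omega⟩ := fun j => by
    rw [iterate_piecewiseOn_pathStep]
    simp
  have hper : ∀ j, g^[j] (e ⟨0, hk⟩) ∈ periodicPts g ↔ k - 1 ≤ j := fun j => by
    rw [periodicPts_piecewiseOn_pathStep e hk h, hiter, mem_singleton_iff, Subtype.val_inj,
      e.apply_eq_iff_eq, Fin.mk.injEq]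
    omega
  have hpre : preperiod g (e ⟨0, hk⟩) = k - 1 := by
    refine le_antisymm (not_lt.mp fun hlt => ?_)
      ((hper _).mp (iterate_preperiod_mem_periodicPts g _))
    exact iterate_notMem_periodicPts_of_lt_preperiod g _ hlt ((hper _).mpr le_rfl)
  ext y
  refine ⟨?_, fun hy => ?_⟩
  · rintro ⟨j, -, rfl⟩
    dsimp only
    rw [hiter]
    exact (e _).2
  · refine ⟨e.symm ⟨y, hy⟩, by rw [hpre, mem_Iic]; omega, ?_⟩
    dsimp only
    rw [hiter]
    simp [show min (e.symm ⟨y, hy⟩ : ℕ) (k - 1) = e.symm ⟨y, hy⟩ by omega]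

theorem piecewiseOn_pathStep_spineEquiv [Finite α] {g : α → α} {r x : α}
    (hr : periodicPts g = {r}) (hS : spine g x = S) :
    piecewiseOn S (pathStep (spineEquiv hS)) (piecewiseOn S Subtype.val g) = g := by
  have hcard : Nat.card S - 1 = preperiod g x := by rw [← hS, card_spine, Nat.add_sub_cancel]
  have hfix : g (g^[preperiod g x] x) = g^[preperiod g x] x := by
    have hr' := iterate_preperiod_mem_periodicPts g x
    rw [hr, mem_singleton_iff] at hr'
    rw [hr', apply_eq_of_periodicPts_eq_singleton hr]
  funext y
  by_cases hy : y ∈ S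
  · obtain ⟨i, hi⟩ := (spineEquiv hS).surjective ⟨y, hy⟩
    obtain rfl : g^[i] x = y := congrArg Subtype.val hi
    rw [piecewiseOn_of_mem hy, ← hi, pathStep_apply, spineEquiv_apply]
    simp only [hcard, iterate_min_preperiod hfix, iterate_succ_apply']
  · rw [piecewiseOn_of_notMem hy, piecewiseOn_of_notMem hy]

variable (S) in
noncomputable def spineFiberEquiv [Finite α] [Nonempty α] :
    {p : {g : α → α // ∃ r, periodicPts g = {r}} × α // spine p.1.1 p.2 = S} ≃
      (Fin (Nat.card S) ≃ S) × RootedForest S where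
  toFun p := (spineEquiv p.2, RootedForest.cut fun y => by
    obtain ⟨r, hr⟩ := p.1.1.2
    exact (exists_iterate_mem_spine hr y).imp fun _ hm => p.2.subset hm)
  invFun q := ⟨(⟨piecewiseOn S (pathStep q.1) q.2.1, _,
      periodicPts_piecewiseOn_pathStep q.1 q.2.card_pos q.2⟩, q.1 ⟨0, q.2.card_pos⟩),
    spine_piecewiseOn_pathStep q.1 q.2.card_pos q.2⟩
  left_inv := by
    rintro ⟨⟨⟨g, r, hr⟩, x⟩, hS⟩
    exact Subtype.ext (Prod.ext (Subtype.ext (piecewiseOn_pathStep_spineEquiv hr hS)) rfl)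
  right_inv q := by
    refine Prod.ext (Equiv.ext fun i => Subtype.ext ?_) (Subtype.ext ?_)
    · dsimp only
      rw [spineEquiv_apply, iterate_piecewiseOn_pathStep]
      congr 3
      dsimp only
      omega
    · exact piecewiseOn_val_piecewiseOn _ q.2

end Spine

section Joyal

variable {α : Type*} [Finite α]

noncomputable def joyalEquiv [Nonempty α] :
    (α → α) ≃ {g : α → α // ∃ r, periodicPts g = {r}} × α :=
  (Equiv.sigmaFiberEquiv periodicPts).symm.trans <|
    (Equiv.sigmaCongrRight fun S => (periodicPtsFiberEquiv S).trans <|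
      (Equiv.prodCongr ((Finite.equivFin S).equivCongr (Equiv.refl S)) (Equiv.refl _)).trans
        (spineFiberEquiv S).symm).trans <|
    Equiv.sigmaFiberEquiv fun p : {g : α → α // ∃ r, periodicPts g = {r}} × α =>
      spine p.1.1 p.2

theorem card_existsUnique_periodic_mul_card [Nonempty α] :
    Nat.card {f : α → α // ∃! x, ∃ k ≥ 1, f^[k] x = x} * Nat.card α =
      Nat.card α ^ Nat.card α := by
  rw [← Nat.card_prod, ← Nat.card_fun]
  refine Nat.card_congr (joyalEquiv.trans (Equiv.prodCongr ?_ (Equiv.refl α))).symm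
  exact Equiv.subtypeEquivRight fun _ => existsUnique_periodic_iff_periodicPts_eq_singleton.symm

end Joyal

theorem card_unique_periodic_point (n : ℕ) (hn : 1 ≤ n) :
    Nat.card {f : Fin n → Fin n // ∃! x : Fin n, ∃ k ≥ 1, f^[k] x = x}
      = n ^ (n - 1) := by
  have : Nonempty (Fin n) := ⟨⟨0, hn⟩⟩
  have h := card_existsUnique_periodic_mul_card (α := Fin n)
  rw [Nat.card_fin, ← pow_sub_one_mul (by omega)] at h
  exact Nat.eq_of_mul_eq_mul_right hn h
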